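/- Let L be a level datum such that L is empty, or the largest level of L is < 1, or the largest level of L is > 2 (i.e. L is a locally minimal level datum at infinity). Then B_L = 4 if and only if L = {7/2}. -/

import Mathlib

open Finset

/-- The ramification order of a level datum: the least common denominator of its
elements, i.e. the lcm of the denominators (`ram ∅ = 1`). -/
def ram (L : Finset ℚ) : ℕ := L.lcm Rat.den

/-- The least common denominator `d` of the "initial segment" of `L` consisting of the
elements `≥ k` (the elements come in decreasing order `k₀ > k₁ > ⋯`). -/
def segLcm (L : Finset ℚ) (k : ℚ) : ℕ := (L.filter (fun x => k ≤ x)).lcm Rat.den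

/-- A level datum: a finite set of positive rationals such that the least common
denominators `d₀, d₁, …` of the initial segments (for the decreasing order) are all `≥ 2`
and form a strictly increasing sequence.  (Since the `d_j` are increasing, requiring
`d_j ≥ 2` for all `j` is equivalent to `d₀ ≥ 2`, i.e. to the largest element not being
an integer.) -/
def IsLevelDatum (L : Finset ℚ) : Prop :=
  (∀ k ∈ L, 0 < k) ∧
  (∀ k ∈ L, 2 ≤ segLcm L k) ∧
  (∀ k ∈ L, ∀ k' ∈ L, k' < k → segLcm L k < segLcm L k')

/-- The largest level of `L` (junk value `0` for `L = ∅`). -/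
def maxLevel (L : Finset ℚ) : ℚ := WithBot.unbotD 0 L.max

/-- The numerator `s(k) := k · Ram(L) ∈ ℤ` of a level `k` of `L`. -/
def numer (L : Finset ℚ) (k : ℚ) : ℤ := (k * (ram L : ℚ)).num

/-- `σ := k₀ · Ram(L) ∈ ℤ`, the numerator of the largest level. -/
def sigma0 (L : Finset ℚ) : ℤ := numer L (maxLevel L)

/-- `gcd(s(x) for x ∈ s, Ram L)` : the gcd of `Ram L` together with the numerators of the
elements of a subset `s ⊆ L`. -/
def gSeg (L : Finset ℚ) (s : Finset ℚ) : ℕ :=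
  Nat.gcd (ram L) (s.gcd (fun x => (numer L x).natAbs))

/-- The quantity
`B_L = (r − (s₀,r))·s₀ + Σᵢ ((s₀,…,s_{i−1},r) − (s₀,…,s_i,r))·s_i − r² + 1`
(`B_∅ = 0`), equal to the dimension of the elementary wild character variety. -/
def B (L : Finset ℚ) : ℤ :=
  (∑ k ∈ L, ((gSeg L (L.filter (fun x => k < x)) : ℤ)
      - (gSeg L (L.filter (fun x => k ≤ x)) : ℤ)) * numer L k)
    - (ram L : ℤ) ^ 2 + 1

/-- A level datum is locally minimal at infinity if it is empty, or its largest level is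
`< 1` or `> 2`. -/
def LocallyMinimal (L : Finset ℚ) : Prop :=
  L = ∅ ∨ maxLevel L < 1 ∨ 2 < maxLevel L

/-- Rescaling of a level datum by a factor `c`, removing the integer elements. -/
def rescale (L : Finset ℚ) (c : ℚ) : Finset ℚ :=
  (L.image (fun k => c * k)).filter (fun x => x.den ≠ 1)

/-- The local simplification map `S_∞` on level data: if the largest level `k₀` satisfies
`1 < k₀ < 2`, rescale all the levels by `ρ/(σ−ρ)` (where `ρ = Ram L`, `σ = k₀·ρ`) and
remove the integer levels; otherwise do nothing. -/
def Sinf (L : Finset ℚ) : Finset ℚ :=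
  if 1 < maxLevel L ∧ maxLevel L < 2 then
    rescale L ((ram L : ℚ) / ((sigma0 L : ℚ) - (ram L : ℚ)))
  else L

/-!
Write `B L + r² − 1 = Σ c_k s_k`, where `r = Ram L`, `s_k = k r`, and `c_k ≥ 0` is the drop of
the running gcd at `k`; the `c_k` telescope to at most `r − 1`. If all levels are `< 1`, then
`s_k ≤ r − 1` and `B L ≤ 2 − 2r < 4`. If the top level `k₀` is `> 2`, its term alone is
`(r − g) s₀` with `g = (s₀, r)` a proper divisor of `r` (as `k₀ ∉ ℤ`) and `s₀ ≥ 2r + g`; this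
exceeds `r² + 3` unless `r = 2`. A level datum with `Ram L = 2` is a single level `n/2`, and
`B {n/2} = n − 3`.
-/

def gcdDrop (L : Finset ℚ) (k : ℚ) : ℤ :=
  (gSeg L (L.filter (fun x => k < x)) : ℤ) - gSeg L (L.filter (fun x => k ≤ x))

lemma B_eq_sum_gcdDrop (L : Finset ℚ) :
    B L = ∑ k ∈ L, gcdDrop L k * numer L k - (ram L : ℤ) ^ 2 + 1 := rfl

lemma ram_pos (L : Finset ℚ) : 0 < ram L := by
  refine Nat.pos_of_ne_zero fun h => ?_
  rw [ram, Finset.lcm_eq_zero_iff] at h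
  simp at h

lemma ram_singleton (k : ℚ) : ram {k} = k.den := by
  simp [ram]

lemma segLcm_dvd_ram (L : Finset ℚ) (k : ℚ) : segLcm L k ∣ ram L :=
  Finset.lcm_dvd fun _ hb => Finset.dvd_lcm (Finset.mem_of_mem_filter _ hb)

lemma numer_cast {L : Finset ℚ} {k : ℚ} (hk : k ∈ L) : (numer L k : ℚ) = k * ram L := by
  obtain ⟨m, hm⟩ : k.den ∣ ram L := Finset.dvd_lcm hk
  have h : k * (ram L : ℚ) = ((k.num * m : ℤ) : ℚ) := by
    rw [hm]
    push_cast
    rw [← mul_assoc, Rat.mul_den_eq_num]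
  rw [numer, h, Rat.num_intCast]

lemma numer_singleton (k : ℚ) : numer {k} k = k.num := by
  rw [numer, ram_singleton, Rat.mul_den_eq_num, Rat.num_intCast]

lemma numer_pos {L : Finset ℚ} {k : ℚ} (hk : k ∈ L) (hpos : 0 < k) : 0 < numer L k := by
  have h : (0 : ℚ) < numer L k := by
    rw [numer_cast hk]
    exact mul_pos hpos (by exact_mod_cast ram_pos L)
  exact_mod_cast h

lemma den_eq_one_of_ram_dvd_numer {L : Finset ℚ} {k : ℚ} (hk : k ∈ L)
    (h : (ram L : ℤ) ∣ numer L k) : k.den = 1 := by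
  obtain ⟨t, ht⟩ := h
  have hkt : k = t := by
    have hr : (ram L : ℚ) ≠ 0 := by exact_mod_cast (ram_pos L).ne'
    have := numer_cast hk
    rw [ht, Int.cast_mul, Int.cast_natCast, mul_comm] at this
    exact (mul_right_cancel₀ hr this).symm
  rw [hkt, Rat.den_intCast]

section gSeg

variable (L : Finset ℚ)

lemma gSeg_empty : gSeg L ∅ = ram L := by
  simp [gSeg]

lemma gSeg_singleton (k : ℚ) : gSeg L {k} = Nat.gcd (ram L) (numer L k).natAbs := by
  simp [gSeg]

lemma gSeg_pos (s : Finset ℚ) : 0 < gSeg L s := Nat.gcd_pos_of_pos_left _ (ram_pos L)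

lemma gSeg_dvd_ram (s : Finset ℚ) : gSeg L s ∣ ram L := Nat.gcd_dvd_left _ _

variable {L} in
lemma gSeg_dvd_numer {s : Finset ℚ} {k : ℚ} (hk : k ∈ s) : (gSeg L s : ℤ) ∣ numer L k :=
  Int.natCast_dvd.2 ((Nat.gcd_dvd_right _ _).trans (Finset.gcd_dvd hk))

lemma gSeg_dvd_gSeg {s t : Finset ℚ} (h : s ⊆ t) : gSeg L t ∣ gSeg L s :=
  Nat.dvd_gcd (Nat.gcd_dvd_left _ _)
    ((Nat.gcd_dvd_right _ _).trans (Finset.dvd_gcd fun _ hb => Finset.gcd_dvd (h hb)))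

lemma gSeg_le_gSeg {s t : Finset ℚ} (h : s ⊆ t) : gSeg L t ≤ gSeg L s :=
  Nat.le_of_dvd (gSeg_pos L s) (gSeg_dvd_gSeg L h)

lemma gcdDrop_nonneg (k : ℚ) : 0 ≤ gcdDrop L k := by
  rw [gcdDrop, sub_nonneg, Nat.cast_le]
  exact gSeg_le_gSeg L (Finset.monotone_filter_right L fun _ _ hx => le_of_lt hx)

lemma sum_gcdDrop_le (T : Finset ℚ) (b : ℚ) (hT : ∀ k ∈ T, k < b) :
    ∑ k ∈ T, gcdDrop L k ≤ gSeg L (L.filter (fun x => b ≤ x)) - 1 := by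
  induction T using Finset.induction_on_max generalizing b with
  | empty =>
    rw [Finset.sum_empty, sub_nonneg, Nat.one_le_cast]
    exact gSeg_pos L _
  | insert a s ha ih =>
    have hab : a < b := hT a (Finset.mem_insert_self a s)
    rw [Finset.sum_insert fun h => lt_irrefl a (ha a h)]
    have hs := ih a ha
    have hle : (gSeg L (L.filter (fun x => a < x)) : ℤ) ≤ gSeg L (L.filter (fun x => b ≤ x)) :=
      Nat.cast_le.2 (gSeg_le_gSeg L
        (Finset.monotone_filter_right L fun _ _ hx => lt_of_lt_of_le hab hx))
    rw [gcdDrop]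
    linarith

lemma sum_gcdDrop_le_ram_sub_one : ∑ k ∈ L, gcdDrop L k ≤ ram L - 1 := by
  obtain rfl | hne := L.eq_empty_or_nonempty
  · simp [ram]
  have hlt : ∀ k ∈ L, k < L.max' hne + 1 := fun k hk =>
    (L.le_max' k hk).trans_lt (lt_add_one _)
  have hempty : L.filter (fun x => L.max' hne + 1 ≤ x) = ∅ :=
    Finset.filter_eq_empty_iff.2 fun x hx => not_le.2 (hlt x hx)
  simpa [hempty, gSeg_empty] using sum_gcdDrop_le L L _ hlt

end gSeg

section maxLevel

variable {L : Finset ℚ}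

lemma nonempty_of_maxLevel_ne_zero (h : maxLevel L ≠ 0) : L.Nonempty :=
  Finset.nonempty_iff_ne_empty.2 fun hL => h (hL ▸ rfl)

lemma maxLevel_eq_max' (hne : L.Nonempty) : maxLevel L = L.max' hne := by
  rw [maxLevel, ← Finset.coe_max' hne, WithBot.unbotD_coe]

lemma maxLevel_mem (hne : L.Nonempty) : maxLevel L ∈ L := by
  rw [maxLevel_eq_max' hne]
  exact L.max'_mem hne

lemma le_maxLevel {k : ℚ} (hk : k ∈ L) : k ≤ maxLevel L := by
  rw [maxLevel_eq_max' ⟨k, hk⟩]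
  exact L.le_max' k hk

lemma filter_maxLevel_lt : L.filter (fun x => maxLevel L < x) = ∅ :=
  Finset.filter_eq_empty_iff.2 fun _ hx => not_lt.2 (le_maxLevel hx)

lemma filter_maxLevel_le (hne : L.Nonempty) :
    L.filter (fun x => maxLevel L ≤ x) = {maxLevel L} := by
  ext x
  simp only [Finset.mem_filter, Finset.mem_singleton]
  constructor
  · rintro ⟨hx, hle⟩
    exact le_antisymm (le_maxLevel hx) hle
  · rintro rfl
    exact ⟨maxLevel_mem hne, le_rfl⟩

lemma gcdDrop_maxLevel (hne : L.Nonempty) :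
    gcdDrop L (maxLevel L) = ram L - gSeg L {maxLevel L} := by
  rw [gcdDrop, filter_maxLevel_lt, filter_maxLevel_le hne, gSeg_empty]

lemma two_le_den_maxLevel (hL : IsLevelDatum L) (hne : L.Nonempty) : 2 ≤ (maxLevel L).den := by
  have h := hL.2.1 _ (maxLevel_mem hne)
  rwa [segLcm, filter_maxLevel_le hne, Finset.lcm_singleton, normalize_eq] at h

end maxLevel

lemma B_le_of_forall_lt_one {L : Finset ℚ} (h : ∀ k ∈ L, k < 1) : B L ≤ 2 - 2 * ram L := by
  have hnumer : ∀ k ∈ L, numer L k ≤ ram L - 1 := by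
    intro k hk
    have hq : (numer L k : ℚ) < ram L := by
      rw [numer_cast hk]
      exact mul_lt_of_lt_one_left (by exact_mod_cast ram_pos L) (h k hk)
    have : numer L k < ram L := by exact_mod_cast hq
    omega
  have hr : (1 : ℤ) ≤ ram L := by exact_mod_cast ram_pos L
  have hsum : ∑ k ∈ L, gcdDrop L k * numer L k ≤ (ram L - 1) * (ram L - 1) :=
    calc ∑ k ∈ L, gcdDrop L k * numer L k
        ≤ ∑ k ∈ L, gcdDrop L k * (ram L - 1) :=
          Finset.sum_le_sum fun k hk =>
            mul_le_mul_of_nonneg_left (hnumer k hk) (gcdDrop_nonneg L k)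
      _ = (∑ k ∈ L, gcdDrop L k) * (ram L - 1) := (Finset.sum_mul ..).symm
      _ ≤ (ram L - 1) * (ram L - 1) :=
          mul_le_mul_of_nonneg_right (sum_gcdDrop_le_ram_sub_one L) (by linarith)
  rw [B_eq_sum_gcdDrop]
  nlinarith

lemma two_mul_gSeg_singleton_le {L : Finset ℚ} {k : ℚ} (hk : k ∈ L) (hden : k.den ≠ 1) :
    2 * gSeg L {k} ≤ ram L := by
  obtain ⟨c, hc⟩ := gSeg_dvd_ram L {k}
  have hc1 : c ≠ 1 := by
    rintro rfl
    exact hden (den_eq_one_of_ram_dvd_numer hk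
      (by simpa [hc] using gSeg_dvd_numer (L := L) (Finset.mem_singleton_self k)))
  have hc0 : c ≠ 0 := by
    rintro rfl
    exact (ram_pos L).ne' (by simpa using hc)
  rw [hc, mul_comm]
  exact Nat.mul_le_mul_left _ (by omega)

lemma two_mul_ram_add_gSeg_singleton_le {L : Finset ℚ} {k : ℚ} (hk : k ∈ L) (h2 : 2 < k) :
    2 * ram L + gSeg L {k} ≤ numer L k := by
  have hlt : 2 * (ram L : ℤ) < numer L k := by
    have hq : ((2 * ram L : ℤ) : ℚ) < numer L k := by
      rw [numer_cast hk]
      push_cast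
      exact mul_lt_mul_of_pos_right h2 (by exact_mod_cast ram_pos L)
    exact_mod_cast hq
  have hdvd : (gSeg L {k} : ℤ) ∣ numer L k - 2 * ram L :=
    dvd_sub (gSeg_dvd_numer (Finset.mem_singleton_self k))
      (Dvd.dvd.mul_left (Int.natCast_dvd_natCast.2 (gSeg_dvd_ram L _)) 2)
  linarith [Int.le_of_dvd (by linarith) hdvd]

lemma le_two_of_sub_mul_le {r g s : ℤ} (hg : 1 ≤ g) (hgr : 2 * g ≤ r) (hs : 2 * r + g ≤ s)
    (h : (r - g) * s ≤ r ^ 2 + 3) : r ≤ 2 := by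
  by_contra! hr
  -- `(r - g) (2r + g) = r² + (r - 2g) (r + g) + g²`
  have hgt : r ^ 2 + 3 < (r - g) * (2 * r + g) := by
    rcases (by omega : r = 2 * g ∨ 2 * g + 1 ≤ r) with rfl | hr'
    · nlinarith [(by omega : 2 ≤ g)]
    · nlinarith [mul_nonneg (by linarith : 0 ≤ r - 2 * g - 1) (by linarith : 0 ≤ r + g)]
  linarith [mul_le_mul_of_nonneg_left hs (by linarith : 0 ≤ r - g)]

lemma ram_le_two_of_B_le_four {L : Finset ℚ} (hL : IsLevelDatum L) (h2 : 2 < maxLevel L)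
    (hB : B L ≤ 4) : ram L ≤ 2 := by
  have hne := nonempty_of_maxLevel_ne_zero (zero_lt_two.trans h2).ne'
  have hk₀ := maxLevel_mem hne
  have hterm : gcdDrop L (maxLevel L) * numer L (maxLevel L)
      ≤ ∑ k ∈ L, gcdDrop L k * numer L k :=
    Finset.single_le_sum (fun k hk => mul_nonneg (gcdDrop_nonneg L k)
      (numer_pos hk (hL.1 k hk)).le) hk₀
  rw [gcdDrop_maxLevel hne] at hterm
  have hgr := two_mul_gSeg_singleton_le hk₀ (by have := two_le_den_maxLevel hL hne; omega)
  have hs := two_mul_ram_add_gSeg_singleton_le hk₀ h2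
  rw [B_eq_sum_gcdDrop] at hB
  exact_mod_cast le_two_of_sub_mul_le (by exact_mod_cast gSeg_pos L _)
    (by exact_mod_cast hgr) hs (by linarith)

lemma eq_singleton_maxLevel_of_ram_le_two {L : Finset ℚ} (hL : IsLevelDatum L)
    (hne : L.Nonempty) (hr : ram L ≤ 2) : L = {maxLevel L} := by
  refine Finset.eq_singleton_iff_unique_mem.2 ⟨maxLevel_mem hne, fun k hk => ?_⟩
  by_contra hne'
  have hlt := hL.2.2 _ (maxLevel_mem hne) k hk (lt_of_le_of_ne (le_maxLevel hk) hne')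
  have := hL.2.1 _ (maxLevel_mem hne)
  have := Nat.le_of_dvd (ram_pos L) (segLcm_dvd_ram L k)
  omega

lemma B_singleton (k : ℚ) : B {k} = (k.den - 1) * k.num - k.den ^ 2 + 1 := by
  have hne : ({k} : Finset ℚ).Nonempty := Finset.singleton_nonempty k
  have hmax : maxLevel {k} = k := by simpa using maxLevel_mem hne
  have hdrop := gcdDrop_maxLevel hne
  rw [hmax] at hdrop
  rw [B_eq_sum_gcdDrop, Finset.sum_singleton, hdrop, gSeg_singleton, numer_singleton,
    ram_singleton, Nat.Coprime.gcd_eq_one k.reduced.symm]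
  push_cast
  ring

lemma eq_seven_halves_of_B_singleton {k : ℚ} (hd : k.den ≤ 2) (hB : B {k} = 4) : k = 7 / 2 := by
  rw [B_singleton] at hB
  have hd2 : k.den = 2 := by
    interval_cases h : k.den
    · exact absurd h k.den_ne_zero
    · norm_num at hB
    · rfl
  rw [hd2] at hB
  push_cast at hB
  rw [← Rat.num_div_den k, hd2, show k.num = 7 by linarith]
  norm_num

/-- for a locally minimal level datum at infinity, `B_L = 4 ↔ L = {7/2}`. -/
theorem stmt_5 (L : Finset ℚ) (hL : IsLevelDatum L) (hmin : LocallyMinimal L) :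
    B L = 4 ↔ L = {(7 : ℚ) / 2} := by
  refine ⟨fun hB => ?_, fun h => by rw [h, B_singleton]; norm_num⟩
  rcases hmin with rfl | h1 | h2
  · simp [B, ram] at hB
  · have := B_le_of_forall_lt_one fun k hk => (le_maxLevel hk).trans_lt h1
    have := ram_pos L
    omega
  · have hr := ram_le_two_of_B_le_four hL h2 hB.le
    have hsingle := eq_singleton_maxLevel_of_ram_le_two hL
      (nonempty_of_maxLevel_ne_zero (zero_lt_two.trans h2).ne') hr
    rw [hsingle] at hB ⊢
    rw [hsingle, ram_singleton] at hr
    rw [eq_seven_halves_of_B_singleton hr hB]
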